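/- Suppose ℓ : 𝒜 → ℝ satisfies σ(α(ℓ(a) − ℓ(b))) = σ(β(Q(a) − Q(b))) for all a, b ∈ 𝒜. Then there exists a constant c ∈ ℝ such that ℓ(a) = c + (β/α)·Q(a) for every a ∈ 𝒜. If in addition Σ_a e^{ℓ(a)} = 1, then e^{ℓ(a)} = exp((β/α)·Q(a)) / Σ_{a'} exp((β/α)·Q(a')) for every a ∈ 𝒜. -/

import Mathlib

open Finset

noncomputable def sigmoid (z : ℝ) : ℝ := 1 / (1 + Real.exp (-z))

theorem sigmoid_eq_real_sigmoid : sigmoid = Real.sigmoid := by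
  funext z
  rw [sigmoid, Real.sigmoid, one_div]

theorem sigmoid_injective : Function.Injective sigmoid :=
  sigmoid_eq_real_sigmoid ▸ Real.sigmoid_injective

theorem eq_const_add_div_mul_of_mul_sub_eq {A K : Type*} [Field K] {ℓ Q : A → K} {α β : K}
    (hα : α ≠ 0) (h : ∀ a b, α * (ℓ a - ℓ b) = β * (Q a - Q b)) (a₀ a : A) :
    ℓ a = (ℓ a₀ - β / α * Q a₀) + β / α * Q a := by
  field_simp
  linear_combination h a a₀

theorem exp_eq_div_sum_exp_of_sum_exp_eq_one {A : Type*} [Fintype A] {ℓ f : A → ℝ} {c : ℝ}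
    (hℓ : ∀ a, ℓ a = c + f a) (hsum : ∑ a, Real.exp (ℓ a) = 1) (a : A) :
    Real.exp (ℓ a) = Real.exp (f a) / ∑ a', Real.exp (f a') := by
  have hf : ∑ a', Real.exp (f a') = Real.exp (-c) := by
    calc ∑ a', Real.exp (f a') = Real.exp (-c) * ∑ a', Real.exp (ℓ a') := by
          rw [mul_sum]
          refine sum_congr rfl fun a' _ => ?_
          rw [hℓ a', ← Real.exp_add, neg_add_cancel_left]
      _ = Real.exp (-c) := by rw [hsum, mul_one]
  rw [hf, hℓ a, Real.exp_add, Real.exp_neg, div_inv_eq_mul, mul_comm]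

theorem stmt_8_general {A : Type*} [Fintype A] [Nonempty A]
    (Q : A → ℝ) (α β : ℝ) (hα : 0 < α) (ℓ : A → ℝ)
    (hmatch : ∀ a b : A, sigmoid (α * (ℓ a - ℓ b)) = sigmoid (β * (Q a - Q b))) :
    (∃ c : ℝ, ∀ a : A, ℓ a = c + (β / α) * Q a) ∧
    ((∑ a : A, Real.exp (ℓ a)) = 1 →
      ∀ a : A, Real.exp (ℓ a) =
        Real.exp ((β / α) * Q a) / ∑ a' : A, Real.exp ((β / α) * Q a')) := by
  obtain ⟨a₀⟩ := ‹Nonempty A›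
  have hℓ : ∀ a, ℓ a = (ℓ a₀ - β / α * Q a₀) + β / α * Q a :=
    eq_const_add_div_mul_of_mul_sub_eq hα.ne' (fun a b => sigmoid_injective (hmatch a b)) a₀
  exact ⟨⟨_, hℓ⟩, fun hsum => exp_eq_div_sum_exp_of_sum_exp_eq_one hℓ hsum⟩

/-- if σ(α(ℓ a − ℓ b)) = σ(β(Q a − Q b)) for all a, b, then
ℓ = c + (β/α)·Q for some constant c; if moreover Σ_a e^{ℓ(a)} = 1, then
e^{ℓ(a)} is the Gibbs distribution with logits (β/α)·Q. -/
theorem stmt_8 {A : Type*} [Fintype A] [Nonempty A]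
    (Q : A → ℝ) (α β : ℝ) (hα : 0 < α) (hβ : 0 < β) (ℓ : A → ℝ)
    (hmatch : ∀ a b : A, sigmoid (α * (ℓ a - ℓ b)) = sigmoid (β * (Q a - Q b))) :
    (∃ c : ℝ, ∀ a : A, ℓ a = c + (β / α) * Q a) ∧
    ((∑ a : A, Real.exp (ℓ a)) = 1 →
      ∀ a : A, Real.exp (ℓ a) =
        Real.exp ((β / α) * Q a) / ∑ a' : A, Real.exp ((β / α) * Q a')) :=
  stmt_8_general Q α β hα ℓ hmatch
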